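/- Let n be a positive integer and let 1 ≥ a_1 ≥ a_2 ≥ ⋯ ≥ a_n > 0 be a nonincreasing sequence of real numbers. Define s_0 = 0 and, recursively for i ≥ 1, k_i = min{ k ≥ 1 : s_{i-1} + k ≤ n and a_{s_{i-1}+k} > 2^{1−k} } and s_i = s_{i-1} + k_i, with m the largest index for which this minimum exists. Set α = (∑_{j=1}^n a_j/(1 − log₂ a_j)) − 2·ln 2. Then ∏_{i=1}^{m} (1 − 2^{−k_i}) ≤ exp(−α/8). In particular, for every real μ with 0 < μ ≤ 1 − exp(−α/8), there exists 1 ≤ r ≤ m such that ∏_{i=1}^{r} (1 − 2^{−k_i}) ≤ 1 − μ. -/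

import Mathlib

/-!
Write `w(x) = x / (1 - log₂ x)`; for `0 < x ≤ 2^(1-c)` the denominator is at least `c`, so
`w(x) ≤ 2^(1-c) / c`. Minimality of `k_i` gives `a_{s_{i-1}+t} ≤ 2^(1-t)` for `t < k_i`, the same
bound holds past `s_m` by maximality of `m`, and monotonicity caps every entry after tribe `i` by
`2^(2-k_i)`, so the `k_i` are nondecreasing. A run of entries with `a_{A+t} ≤ 2^(1-t)`, all capped
by `2^(2-K)`, has total weight at most `Φ(K) = min(2 ln 2, 6·2^(-K))`: the first bound is the
series of `-ln(1 - 1/2)`, the second a flat head of `K - 1` terms plus a geometric tail. Tribe `i`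
is such a run, capped by tribe `i - 1`, followed by one entry of weight `≤ 2·2^(-k_i)` (or it is a
tribe of size 2, of weight `≤ 2`), hence `w(tribe i) + Φ(k_i) ≤ Φ(k_{i-1}) + 8·2^(-k_i)`.
Telescoping, with the tail after `s_m` bounded by `Φ(k_m)`, gives
`∑ w(a_j) ≤ 2 ln 2 + 8 ∑ 2^(-k_i)`, and `1 - x ≤ e^(-x)` concludes.
-/

open Finset Real

lemma sum_Icc_one_eq_sum_range {M : Type*} [AddCommMonoid M] (f : ℕ → M) (L : ℕ) :
    ∑ t ∈ Icc 1 L, f t = ∑ i ∈ range L, f (i + 1) := by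
  rw [← Ico_add_one_right_eq_Icc, sum_Ico_eq_sum_range, add_tsub_cancel_right]
  simp only [add_comm]

lemma sum_Ioc_self_add_eq_sum_Icc_one {M : Type*} [AddCommMonoid M] (f : ℕ → M) (A L : ℕ) :
    ∑ j ∈ Ioc A (A + L), f j = ∑ t ∈ Icc 1 L, f (A + t) := by
  rw [← Icc_add_one_left_eq_Ioc, ← Ico_add_one_right_eq_Icc, sum_Ico_eq_sum_range,
    sum_Icc_one_eq_sum_range, show A + L + 1 - (A + 1) = L by omega]
  simp only [add_assoc, add_comm 1]

lemma sum_Ico_two_zpow_neg_le (K N : ℕ) :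
    ∑ t ∈ Ico K N, (2 : ℝ) ^ (-(t : ℤ)) ≤ 2 * 2 ^ (-(K : ℤ)) := by
  simp only [zpow_neg, zpow_natCast, ← inv_pow]
  calc ∑ t ∈ Ico K N, (2⁻¹ : ℝ) ^ t ≤ 2⁻¹ ^ K / (1 - 2⁻¹) :=
        geom_sum_Ico_le_of_lt_one (by norm_num) (by norm_num)
    _ = 2 * 2⁻¹ ^ K := by ring

lemma sum_Icc_two_zpow_one_sub_div_le (L : ℕ) :
    ∑ t ∈ Icc 1 L, (2 : ℝ) ^ (1 - (t : ℤ)) / t ≤ 2 * log 2 := by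
  have hlog := hasSum_pow_div_log_of_abs_lt_one (x := 2⁻¹) (by norm_num [abs_of_pos])
  rw [show (1 : ℝ) - 2⁻¹ = 2⁻¹ by norm_num, log_inv, neg_neg] at hlog
  have hterm (i : ℕ) :
      (2 : ℝ) ^ (1 - ((i + 1 : ℕ) : ℤ)) / (i + 1 : ℕ) = 2 * (2⁻¹ ^ (i + 1) / (i + 1)) := by
    rw [show 1 - ((i + 1 : ℕ) : ℤ) = -(i : ℤ) by push_cast; ring, zpow_neg, zpow_natCast]
    push_cast
    rw [pow_succ, inv_pow]
    ring
  rw [sum_Icc_one_eq_sum_range]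
  simp only [hterm, ← mul_sum]
  gcongr
  exact sum_le_hasSum _ (fun i _ => by positivity) hlog

theorem Real.prod_one_sub_le_exp_neg_sum {ι : Type*} (s : Finset ι) (x : ι → ℝ)
    (hx : ∀ i ∈ s, x i ≤ 1) : ∏ i ∈ s, (1 - x i) ≤ exp (-∑ i ∈ s, x i) := by
  rw [← sum_neg_distrib, exp_sum]
  exact prod_le_prod (fun i hi => sub_nonneg.2 (hx i hi)) fun i _ => one_sub_le_exp_neg _

noncomputable def logWeight (x : ℝ) : ℝ := x / (1 - logb 2 x)

lemma logWeight_le {x : ℝ} {c : ℤ} (hx : 0 < x) (hc : 1 ≤ c) (hxc : x ≤ 2 ^ (1 - c)) :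
    logWeight x ≤ 2 ^ (1 - c) / c := by
  have hlog : logb 2 x ≤ 1 - c := by
    rw [logb_le_iff_le_rpow one_lt_two hx]
    exact_mod_cast hxc
  exact div_le_div₀ (by positivity) hxc (by exact_mod_cast hc) (by linarith)

lemma logWeight_le_one {x : ℝ} (hx : 0 < x) (hx1 : x ≤ 1) : logWeight x ≤ 1 := by
  simpa using logWeight_le (c := 1) hx le_rfl (by simpa using hx1)

lemma logWeight_le_two_zpow_neg {x : ℝ} {c : ℤ} (hx : 0 < x) (hc : 2 ≤ c)
    (hxc : x ≤ 2 ^ (1 - c)) : logWeight x ≤ 2 ^ (-c) := by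
  calc logWeight x ≤ 2 ^ (1 - c) / c := logWeight_le hx (by omega) hxc
    _ ≤ 2 ^ (1 - c) / 2 := by gcongr; exact_mod_cast hc
    _ = 2 ^ (-c) := by rw [sub_eq_neg_add, zpow_add₀ two_ne_zero]; ring

section Run

variable {b : ℕ → ℝ}

lemma sum_logWeight_le_two_mul_log_two {L : ℕ}
    (hb : ∀ t ∈ Icc 1 L, 0 < b t ∧ b t ≤ 2 ^ (1 - (t : ℤ))) :
    ∑ t ∈ Icc 1 L, logWeight (b t) ≤ 2 * log 2 := by
  refine (sum_le_sum fun t ht => ?_).trans (sum_Icc_two_zpow_one_sub_div_le L)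
  simpa using logWeight_le (hb t ht).1 (by simpa using (mem_Icc.1 ht).1) (hb t ht).2

lemma sum_logWeight_le_of_card_le {S : Finset ℕ} {c : ℤ} (hc : 1 ≤ c) (hS : (#S : ℤ) ≤ c)
    (hb : ∀ t ∈ S, 0 < b t ∧ b t ≤ 2 ^ (1 - c)) :
    ∑ t ∈ S, logWeight (b t) ≤ 2 ^ (1 - c) := by
  have hc' : (1 : ℝ) ≤ c := by exact_mod_cast hc
  calc ∑ t ∈ S, logWeight (b t) ≤ #S • (2 ^ (1 - c) / c : ℝ) :=
        sum_le_card_nsmul _ _ _ fun t ht => logWeight_le (hb t ht).1 hc (hb t ht).2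
    _ ≤ c * (2 ^ (1 - c) / c : ℝ) := by
        rw [nsmul_eq_mul]
        gcongr
        exact_mod_cast hS
    _ = 2 ^ (1 - c) := mul_div_cancel₀ _ (by positivity)

lemma sum_logWeight_le_of_subset_Ico {S : Finset ℕ} {K N : ℕ} (hK : 2 ≤ K) (hS : S ⊆ Ico K N)
    (hb : ∀ t ∈ S, 0 < b t ∧ b t ≤ 2 ^ (1 - (t : ℤ))) :
    ∑ t ∈ S, logWeight (b t) ≤ 2 * 2 ^ (-(K : ℤ)) :=
  calc ∑ t ∈ S, logWeight (b t)
      ≤ ∑ t ∈ S, (2 : ℝ) ^ (-(t : ℤ)) := sum_le_sum fun t ht =>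
        logWeight_le_two_zpow_neg (hb t ht).1 (by have := (mem_Ico.1 (hS ht)).1; omega) (hb t ht).2
    _ ≤ ∑ t ∈ Ico K N, (2 : ℝ) ^ (-(t : ℤ)) :=
        sum_le_sum_of_subset_of_nonneg hS fun _ _ _ => by positivity
    _ ≤ 2 * 2 ^ (-(K : ℤ)) := sum_Ico_two_zpow_neg_le K N

lemma sum_logWeight_le_six_mul {L K : ℕ} (hK : 2 ≤ K)
    (hb : ∀ t ∈ Icc 1 L, 0 < b t ∧ b t ≤ 2 ^ (1 - (t : ℤ)))
    (hcap : ∀ t ∈ Icc 1 L, b t ≤ 2 ^ (2 - (K : ℤ))) :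
    ∑ t ∈ Icc 1 L, logWeight (b t) ≤ 6 * 2 ^ (-(K : ℤ)) := by
  rw [← sum_filter_add_sum_filter_not _ (· < K)]
  have hhead : ∑ t ∈ (Icc 1 L).filter (· < K), logWeight (b t) ≤ 2 ^ (1 - ((K : ℤ) - 1)) := by
    refine sum_logWeight_le_of_card_le (by omega) ?_ fun t ht => ?_
    · have : #((Icc 1 L).filter (· < K)) ≤ #(Icc 1 (K - 1)) :=
        card_le_card fun t ht => by simp only [mem_filter, mem_Icc] at ht ⊢; omega
      simp only [Nat.card_Icc] at this
      omega
    · have ht := (mem_filter.1 ht).1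
      exact ⟨(hb t ht).1, (hcap t ht).trans_eq (by ring_nf)⟩
  have htail : ∑ t ∈ (Icc 1 L).filter (¬ · < K), logWeight (b t) ≤ 2 * 2 ^ (-(K : ℤ)) :=
    sum_logWeight_le_of_subset_Ico (N := L + 1) hK
      (fun t ht => by simp only [mem_filter, mem_Icc, mem_Ico] at ht ⊢; omega)
      fun t ht => hb t (mem_filter.1 ht).1
  have hfour : (2 : ℝ) ^ (1 - ((K : ℤ) - 1)) = 4 * 2 ^ (-(K : ℤ)) := by
    rw [show (1 : ℤ) - (K - 1) = 2 + -K by ring, zpow_add₀ two_ne_zero]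
    norm_num
  linarith

end Run

noncomputable def runWeightBound (K : ℕ) : ℝ := min (2 * log 2) (6 * 2 ^ (-(K : ℤ)))

lemma sum_logWeight_le_runWeightBound {b : ℕ → ℝ} {L K : ℕ} (hK : 2 ≤ K)
    (hb : ∀ t ∈ Icc 1 L, 0 < b t ∧ b t ≤ 2 ^ (1 - (t : ℤ)))
    (hcap : ∀ t ∈ Icc 1 L, b t ≤ 2 ^ (2 - (K : ℤ))) :
    ∑ t ∈ Icc 1 L, logWeight (b t) ≤ runWeightBound K :=
  le_min (sum_logWeight_le_two_mul_log_two hb) (sum_logWeight_le_six_mul hK hb hcap)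

structure IsNonincreasingUnitSeq (n : ℕ) (a : ℕ → ℝ) : Prop where
  pos : ∀ j, 1 ≤ j → j ≤ n → 0 < a j
  le_one : ∀ j, 1 ≤ j → j ≤ n → a j ≤ 1
  antitone : ∀ ⦃x y⦄, 1 ≤ x → x ≤ y → y ≤ n → a y ≤ a x

lemma IsNonincreasingUnitSeq.of_succ_le {n : ℕ} {a : ℕ → ℝ}
    (ha : ∀ j, 1 ≤ j → j ≤ n → 0 < a j ∧ a j ≤ 1)
    (hmono : ∀ j, 1 ≤ j → j < n → a (j + 1) ≤ a j) : IsNonincreasingUnitSeq n a where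
  pos j h1 hn := (ha j h1 hn).1
  le_one j h1 hn := (ha j h1 hn).2
  antitone x y hx hxy hy := by
    induction y, hxy using Nat.le_induction with
    | base => rfl
    | succ y hxy ih => exact (hmono y (by omega) hy).trans (ih (by omega))

structure IsGreedyTribes (n : ℕ) (a : ℕ → ℝ) (m : ℕ) (k s : ℕ → ℕ) : Prop where
  s_zero : s 0 = 0
  isLeast_k : ∀ i < m, IsLeast {t : ℕ | 1 ≤ t ∧ s i + t ≤ n ∧
    (2 : ℝ) ^ (1 - (t : ℤ)) < a (s i + t)} (k (i + 1))
  s_succ : ∀ i < m, s (i + 1) = s i + k (i + 1)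
  not_exists : ¬ ∃ t : ℕ, 1 ≤ t ∧ s m + t ≤ n ∧ (2 : ℝ) ^ (1 - (t : ℤ)) < a (s m + t)

namespace IsGreedyTribes

variable {n m : ℕ} {a : ℕ → ℝ} {k s : ℕ → ℕ} {i : ℕ}

lemma add_k_le (T : IsGreedyTribes n a m k s) (hi : i < m) : s i + k (i + 1) ≤ n :=
  (T.isLeast_k i hi).1.2.1

lemma s_le (T : IsGreedyTribes n a m k s) (hi : i ≤ m) : s i ≤ n := by
  cases i with
  | zero => simp [T.s_zero]
  | succ i => rw [T.s_succ i hi]; exact T.add_k_le hi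

lemma le_of_lt_k (T : IsGreedyTribes n a m k s) (hi : i < m) {t : ℕ} (ht : 1 ≤ t)
    (htk : t < k (i + 1)) : a (s i + t) ≤ 2 ^ (1 - (t : ℤ)) := by
  by_contra h
  have := (T.isLeast_k i hi).2 ⟨ht, by linarith [T.add_k_le hi], not_le.1 h⟩
  omega

lemma tail_le (T : IsGreedyTribes n a m k s) {t : ℕ} (ht : 1 ≤ t) (htn : s m + t ≤ n) :
    a (s m + t) ≤ 2 ^ (1 - (t : ℤ)) :=
  not_lt.1 fun h => T.not_exists ⟨t, ht, htn, h⟩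

lemma two_le_k (T : IsGreedyTribes n a m k s) (ha : IsNonincreasingUnitSeq n a) (hi : i < m) :
    2 ≤ k (i + 1) := by
  obtain ⟨⟨hk1, hkn, hlt⟩, -⟩ := T.isLeast_k i hi
  by_contra h
  rw [show k (i + 1) = 1 by omega] at hkn hlt
  norm_num at hlt
  linarith [ha.le_one _ (by omega) hkn]

lemma le_of_s_succ_le (T : IsGreedyTribes n a m k s) (ha : IsNonincreasingUnitSeq n a)
    (hi : i < m) {j : ℕ} (hj : s (i + 1) ≤ j) (hjn : j ≤ n) :
    a j ≤ 2 ^ (2 - (k (i + 1) : ℤ)) := by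
  have hk := T.two_le_k ha hi
  have hs := T.s_succ i hi
  calc a j ≤ a (s i + (k (i + 1) - 1)) := ha.antitone (by omega) (by omega) hjn
    _ ≤ 2 ^ (1 - ((k (i + 1) - 1 : ℕ) : ℤ)) := T.le_of_lt_k hi (by omega) (by omega)
    _ = 2 ^ (2 - (k (i + 1) : ℤ)) := by rw [Nat.cast_sub (by omega)]; ring_nf

/-- Setting `k 0 := 2` makes `a ≤ 1 = 2 ^ (2 - 2)` the cap before the first tribe. -/
lemma le_of_s_lt (T : IsGreedyTribes n a m k s) (ha : IsNonincreasingUnitSeq n a)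
    (hi : i ≤ m) {j : ℕ} (hj : s i < j) (hjn : j ≤ n) :
    a j ≤ 2 ^ (2 - (Function.update k 0 2 i : ℤ)) := by
  cases i with
  | zero => simpa using ha.le_one j (by omega) hjn
  | succ i => simpa using T.le_of_s_succ_le ha hi hj.le hjn

lemma two_le_update (T : IsGreedyTribes n a m k s) (ha : IsNonincreasingUnitSeq n a)
    (hi : i ≤ m) : 2 ≤ Function.update k 0 2 i := by
  cases i with
  | zero => simp
  | succ i => simpa using T.two_le_k ha hi

lemma update_le_k (T : IsGreedyTribes n a m k s) (ha : IsNonincreasingUnitSeq n a)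
    (hi : i < m) : Function.update k 0 2 i ≤ k (i + 1) := by
  obtain ⟨⟨hk1, hkn, hlt⟩, -⟩ := T.isLeast_k i hi
  have := (zpow_lt_zpow_iff_right₀ one_lt_two).1
    (hlt.trans_le (T.le_of_s_lt ha hi.le (by omega) hkn))
  omega

lemma sum_logWeight_tribe_add_le (T : IsGreedyTribes n a m k s)
    (ha : IsNonincreasingUnitSeq n a) (hi : i < m) :
    ∑ j ∈ Ioc (s i) (s (i + 1)), logWeight (a j) + runWeightBound (k (i + 1))
      ≤ runWeightBound (Function.update k 0 2 i) + 8 * 2 ^ (-(k (i + 1) : ℤ)) := by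
  have hK := T.two_le_k ha hi
  have hs := T.s_succ i hi
  have hsn := T.add_k_le hi
  rcases hK.eq_or_lt with hK2 | hK3
  · have hupd : Function.update k 0 2 i = k (i + 1) :=
      le_antisymm (T.update_le_k ha hi) (hK2 ▸ T.two_le_update ha hi.le)
    have hblock :
        ∑ j ∈ Ioc (s i) (s (i + 1)), logWeight (a j) ≤ #(Ioc (s i) (s (i + 1))) • 1 :=
      sum_le_card_nsmul _ _ _ fun j hj => by
        rw [mem_Ioc] at hj
        exact logWeight_le_one (ha.pos j (by omega) (by omega)) (ha.le_one j (by omega) (by omega))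
    rw [Nat.card_Ioc, hs, add_tsub_cancel_left, ← hK2] at hblock
    rw [hupd, hs, ← hK2]
    norm_num at hblock ⊢
    linarith
  · set K := k (i + 1)
    have hrun : ∑ t ∈ Icc 1 (K - 1), logWeight (a (s i + t))
        ≤ runWeightBound (Function.update k 0 2 i) :=
      sum_logWeight_le_runWeightBound (T.two_le_update ha hi.le)
        (fun t ht => by
          rw [mem_Icc] at ht
          exact ⟨ha.pos _ (by omega) (by omega), T.le_of_lt_k hi ht.1 (by omega)⟩)
        (fun t ht => by
          rw [mem_Icc] at ht
          exact T.le_of_s_lt ha hi.le (by omega) (by omega))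
    have hlast : logWeight (a (s i + K)) ≤ 2 * 2 ^ (-(K : ℤ)) := by
      have hcap : a (s i + K) ≤ 2 ^ (1 - ((K : ℤ) - 1)) := by
        rw [show (1 : ℤ) - (K - 1) = 2 - K by ring, ← hs]
        exact T.le_of_s_succ_le ha hi le_rfl (hs ▸ hsn)
      calc logWeight (a (s i + K)) ≤ 2 ^ (-((K : ℤ) - 1)) :=
            logWeight_le_two_zpow_neg (ha.pos _ (by omega) hsn) (by omega) hcap
        _ = 2 * 2 ^ (-(K : ℤ)) := by
          rw [neg_sub, sub_eq_add_neg, zpow_add₀ two_ne_zero, zpow_one]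
    have hbound : runWeightBound K ≤ 6 * 2 ^ (-(K : ℤ)) := min_le_right _ _
    rw [hs, show K = (K - 1) + 1 by omega, sum_Ioc_self_add_eq_sum_Icc_one,
      sum_Icc_succ_top (by omega), show K - 1 + 1 = K by omega]
    linarith

lemma sum_logWeight_Ioc_zero_s_add_le (T : IsGreedyTribes n a m k s)
    (ha : IsNonincreasingUnitSeq n a) (hi : i ≤ m) :
    ∑ j ∈ Ioc 0 (s i), logWeight (a j) + runWeightBound (Function.update k 0 2 i)
      ≤ 2 * log 2 + 8 * ∑ l ∈ Icc 1 i, (2 : ℝ) ^ (-(k l : ℤ)) := by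
  induction i with
  | zero => simp [T.s_zero, runWeightBound]
  | succ i ih =>
    have hstep := T.sum_logWeight_tribe_add_le ha hi
    rw [← sum_Ioc_consecutive _ (Nat.zero_le (s i)) (by rw [T.s_succ i hi]; omega),
      sum_Icc_succ_top (by omega), Function.update_of_ne (by omega)]
    linarith [ih (by omega)]

lemma sum_logWeight_le (T : IsGreedyTribes n a m k s) (ha : IsNonincreasingUnitSeq n a) :
    ∑ j ∈ Icc 1 n, logWeight (a j) ≤ 2 * log 2 + 8 * ∑ i ∈ Icc 1 m, (2 : ℝ) ^ (-(k i : ℤ)) := by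
  have hsm := T.s_le le_rfl
  have htail :
      ∑ j ∈ Ioc (s m) n, logWeight (a j) ≤ runWeightBound (Function.update k 0 2 m) := by
    obtain ⟨L, rfl⟩ : ∃ L, n = s m + L := ⟨n - s m, by omega⟩
    rw [sum_Ioc_self_add_eq_sum_Icc_one]
    refine sum_logWeight_le_runWeightBound (T.two_le_update ha le_rfl)
      (fun t ht => ?_) fun t ht => ?_
    all_goals rw [mem_Icc] at ht
    · exact ⟨ha.pos _ (by omega) (by omega), T.tail_le ht.1 (by omega)⟩
    · exact T.le_of_s_lt ha le_rfl (by omega) (by omega)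
  rw [show Icc 1 n = Ioc 0 n from Icc_add_one_left_eq_Ioc 0 n,
    ← sum_Ioc_consecutive _ (Nat.zero_le (s m)) hsm]
  linarith [T.sum_logWeight_Ioc_zero_s_add_le ha le_rfl]

end IsGreedyTribes

theorem prod_tribes_le_exp_general (n : ℕ) (a : ℕ → ℝ)
    (ha : ∀ j, 1 ≤ j → j ≤ n → 0 < a j ∧ a j ≤ 1)
    (hmono : ∀ j, 1 ≤ j → j < n → a (j + 1) ≤ a j)
    (m : ℕ) (k s : ℕ → ℕ) (hs0 : s 0 = 0)
    (hk : ∀ i, 1 ≤ i → i ≤ m →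
      IsLeast {t : ℕ | 1 ≤ t ∧ s (i - 1) + t ≤ n ∧
        (2 : ℝ) ^ (1 - (t : ℤ)) < a (s (i - 1) + t)} (k i))
    (hs : ∀ i, 1 ≤ i → i ≤ m → s i = s (i - 1) + k i)
    (hm : ¬ ∃ t : ℕ, 1 ≤ t ∧ s m + t ≤ n ∧ (2 : ℝ) ^ (1 - (t : ℤ)) < a (s m + t))
    (α : ℝ) (hα : α = (∑ j ∈ Finset.Icc 1 n, a j / (1 - Real.logb 2 (a j))) - 2 * Real.log 2) :
    (∏ i ∈ Finset.Icc 1 m, (1 - (2 : ℝ) ^ (-(k i : ℤ)))) ≤ Real.exp (-α / 8) ∧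
    ∀ μ : ℝ, 0 < μ → μ ≤ 1 - Real.exp (-α / 8) →
      ∃ r, 1 ≤ r ∧ r ≤ m ∧ (∏ i ∈ Finset.Icc 1 r, (1 - (2 : ℝ) ^ (-(k i : ℤ)))) ≤ 1 - μ := by
  have T : IsGreedyTribes n a m k s :=
    { s_zero := hs0
      isLeast_k := fun i hi => by simpa using hk (i + 1) (by omega) hi
      s_succ := fun i hi => by simpa using hs (i + 1) (by omega) hi
      not_exists := hm }
  have hweight := T.sum_logWeight_le (.of_succ_le ha hmono)
  have hprod : ∏ i ∈ Icc 1 m, (1 - (2 : ℝ) ^ (-(k i : ℤ))) ≤ exp (-α / 8) :=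
    (prod_one_sub_le_exp_neg_sum _ _ fun _ _ => zpow_le_one_of_nonpos₀ one_le_two (by omega)).trans
      (exp_le_exp.2 (by unfold logWeight at hweight; linarith))
  refine ⟨hprod, fun μ hμ hμα => ⟨m, Nat.one_le_iff_ne_zero.2 fun hm0 => ?_, le_rfl, by linarith⟩⟩
  rw [hm0, Icc_eq_empty_of_lt zero_lt_one, prod_empty] at hprod
  linarith

/-- **The product over all tribes is small, so `m_*` is well-defined.**
Let `1 ≥ a_1 ≥ ⋯ ≥ a_n > 0`. With `s_0 = 0`,
`k_i = min{ k ≥ 1 : s_{i-1} + k ≤ n and a_{s_{i-1}+k} > 2^{1-k} }`, `s_i = s_{i-1} + k_i`,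
`m` the largest index for which this minimum exists, and
`α = (∑_{j=1}^n a_j / (1 - log₂ a_j)) - 2 ln 2`, we have
`∏_{i=1}^m (1 - 2^{-k_i}) ≤ exp(-α/8)`; in particular, for every `0 < μ ≤ 1 - exp(-α/8)`
there exists `1 ≤ r ≤ m` with `∏_{i=1}^r (1 - 2^{-k_i}) ≤ 1 - μ`. -/
theorem prod_tribes_le_exp (n : ℕ) (hn : 1 ≤ n) (a : ℕ → ℝ)
    (ha : ∀ j, 1 ≤ j → j ≤ n → 0 < a j ∧ a j ≤ 1)
    (hmono : ∀ j, 1 ≤ j → j < n → a (j + 1) ≤ a j)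
    (m : ℕ) (k s : ℕ → ℕ) (hs0 : s 0 = 0)
    (hk : ∀ i, 1 ≤ i → i ≤ m →
      IsLeast {t : ℕ | 1 ≤ t ∧ s (i - 1) + t ≤ n ∧
        (2 : ℝ) ^ (1 - (t : ℤ)) < a (s (i - 1) + t)} (k i))
    (hs : ∀ i, 1 ≤ i → i ≤ m → s i = s (i - 1) + k i)
    (hm : ¬ ∃ t : ℕ, 1 ≤ t ∧ s m + t ≤ n ∧ (2 : ℝ) ^ (1 - (t : ℤ)) < a (s m + t))
    (α : ℝ) (hα : α = (∑ j ∈ Finset.Icc 1 n, a j / (1 - Real.logb 2 (a j))) - 2 * Real.log 2) :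
    (∏ i ∈ Finset.Icc 1 m, (1 - (2 : ℝ) ^ (-(k i : ℤ)))) ≤ Real.exp (-α / 8) ∧
    ∀ μ : ℝ, 0 < μ → μ ≤ 1 - Real.exp (-α / 8) →
      ∃ r, 1 ≤ r ∧ r ≤ m ∧ (∏ i ∈ Finset.Icc 1 r, (1 - (2 : ℝ) ^ (-(k i : ℤ)))) ≤ 1 - μ :=
  prod_tribes_le_exp_general n a ha hmono m k s hs0 hk hs hm α hα
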